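/- arXiv:math-ph/0105007 — 2 statements merged into one kernel-verified Lean document; each statement's English description precedes it below -/
import Mathlib

section
/- For every complex number s with Re(s) > 1, the Riemann zeta function satisfies ζ(s) = (1/(s-1)) · Σ_{k=0}^∞ ((1 - s/2)_k / k!) · A_k, where the series on the right converges. -/
open Filter Topology Finset

/-- The coefficients `A_k = ∑_{j=0}^k (-1)^j (k choose j) (2j+1) ζ(2j+2)`. -/
noncomputable def maslankaA (k : ℕ) : ℂ :=
  ∑ j ∈ Finset.range (k + 1),
    (-1) ^ j * (k.choose j : ℂ) * (2 * (j : ℂ) + 1) * riemannZeta (2 * (j : ℂ) + 2)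

noncomputable def mc (a : ℂ) (k : ℕ) : ℂ := (ascPochhammer ℂ k).eval a / (k.factorial : ℂ)

lemma kc_ne (k : ℕ) : ((k:ℂ) + 1) ≠ 0 := by
  intro h
  have : ((k+1 : ℕ) : ℂ) = 0 := by push_cast; linear_combination h
  exact Nat.succ_ne_zero k (Nat.cast_eq_zero.mp this)

lemma mc_zero (a : ℂ) : mc a 0 = 1 := by simp [mc]

lemma mc_succ (a : ℂ) (k : ℕ) : mc a (k + 1) = mc a k * (a + k) / (k + 1) := by
  have h1 : ((k.factorial : ℂ)) ≠ 0 := Nat.cast_ne_zero.2 k.factorial_ne_zero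
  have h2 := kc_ne k
  rw [mc, mc, ascPochhammer_succ_eval, Nat.factorial_succ]
  push_cast
  rw [div_mul_eq_mul_div, div_div, div_eq_div_iff (mul_ne_zero h2 h1) (mul_ne_zero h1 h2)]
  ring

lemma mc_shift (a : ℂ) (k : ℕ) : ((k:ℂ) + 1) * mc a (k + 1) = a * mc (a + 1) k := by
  have h1 : ((k.factorial : ℂ)) ≠ 0 := Nat.cast_ne_zero.2 k.factorial_ne_zero
  have h2 := kc_ne k
  rw [mc, mc, ascPochhammer_succ_left, Polynomial.eval_mul, Polynomial.eval_X,
    Polynomial.eval_comp, Polynomial.eval_add, Polynomial.eval_X, Polynomial.eval_one,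
    Nat.factorial_succ]
  push_cast
  rw [mul_div_assoc', mul_div_assoc', div_eq_div_iff (mul_ne_zero h2 h1) h1]
  ring

lemma mc_succ_mul (a : ℂ) (k : ℕ) : mc a (k+1) * ((k:ℂ) + 1) = mc a k * (a + k) := by
  rw [mc_succ, div_mul_cancel₀ _ (kc_ne k)]

lemma norm_mc_succ (a : ℂ) (k : ℕ) :
    ‖mc a (k+1)‖ = ‖mc a k‖ * ‖a + k‖ / ((k:ℝ) + 1) := by
  rw [mc_succ, norm_div, norm_mul]
  congr 1
  have : ((k:ℂ) + 1) = ((k+1 : ℕ) : ℂ) := by push_cast; ring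
  rw [this, Complex.norm_natCast]
  push_cast; ring

theorem hasSum_binom (a : ℂ) {z : ℝ} (h0 : 0 ≤ z) (h1 : z < 1) :
    HasSum (fun k : ℕ => mc a k * (z:ℂ)^k) (((1 - z : ℝ) : ℂ) ^ (-a)) := by
  set r : ℝ := (1+z)/2 with hr
  have hzr : z < r := by rw [hr]; linarith
  have hr1 : r < 1 := by rw [hr]; linarith
  have hr0 : 0 < r := by rw [hr]; linarith
  set r' : ℝ := (1+r)/2 with hr'
  have hrr' : r < r' := by rw [hr']; linarith
  have hr'1 : r' < 1 := by rw [hr']; linarith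
  set u : ℕ → ℝ := fun k => ‖mc a k‖ * k * r^(k-1) with hu_def
  have hu_nonneg : ∀ k, 0 ≤ u k := fun k => by positivity
  have hu : Summable u := by
    apply summable_of_ratio_norm_eventually_le hr'1
    obtain ⟨K, hK⟩ := exists_nat_ge ((‖a‖ * r) / (r' - r))
    filter_upwards [eventually_ge_atTop (K+1)] with k hk
    have hk1 : 1 ≤ k := le_trans (Nat.le_add_left 1 K) hk
    have hkK : (K:ℝ) ≤ (k:ℝ) := by exact_mod_cast le_trans (Nat.le_succ K) hk
    rw [Real.norm_of_nonneg (hu_nonneg _), Real.norm_of_nonneg (hu_nonneg _)]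
    have e1 : u (k+1) = ‖mc a k‖ * ‖a + k‖ * r^k := by
      rw [hu_def]; simp only [Nat.add_sub_cancel]
      rw [norm_mc_succ]
      have h5 : ((k:ℝ)+1) ≠ 0 := by positivity
      field_simp
      rw [Nat.cast_add_one]
    rw [e1]
    have e2 : u k = ‖mc a k‖ * k * r^(k-1) := rfl
    rw [e2]
    have hrk : r^k = r^(k-1) * r := by
      conv_lhs => rw [show k = (k-1)+1 by omega]
      rw [pow_succ]
    rw [hrk]
    have key : ‖a + k‖ * r ≤ r' * k := by
      have h3 : ‖a + (k:ℂ)‖ ≤ ‖a‖ + k := by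
        calc ‖a + (k:ℂ)‖ ≤ ‖a‖ + ‖(k:ℂ)‖ := norm_add_le _ _
        _ = ‖a‖ + k := by rw [Complex.norm_natCast]
      have h4 : ‖a‖ * r ≤ (r' - r) * k := by
        have := (div_le_iff₀ (by linarith)).mp hK
        nlinarith [norm_nonneg a]
      nlinarith [norm_nonneg (a + (k:ℂ)), hr0.le]
    calc ‖mc a k‖ * ‖a + k‖ * (r^(k-1) * r) = (‖a + k‖ * r) * (‖mc a k‖ * r^(k-1)) := by ring
    _ ≤ (r' * k) * (‖mc a k‖ * r^(k-1)) := by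
        apply mul_le_mul_of_nonneg_right key (by positivity)
    _ = r' * (‖mc a k‖ * k * r^(k-1)) := by ring
  have hg : ∀ (k:ℕ) (w:ℂ), HasDerivAt (fun w : ℂ => mc a k * w^k) (mc a k * (k * w^(k-1))) w :=
    fun k w => (hasDerivAt_pow k w).const_mul _
  have hbound : ∀ (k:ℕ) (w:ℂ), w ∈ Metric.ball (0:ℂ) r → ‖mc a k * (k * w^(k-1))‖ ≤ u k := by
    intro k w hw
    have hwr : ‖w‖ ≤ r := le_of_lt (by simpa [Metric.mem_ball, dist_zero_right] using hw)
    calc ‖mc a k * (k * w^(k-1))‖ = ‖mc a k‖ * ((k:ℝ) * ‖w‖^(k-1)) := by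
          rw [norm_mul, norm_mul, norm_pow, Complex.norm_natCast]
    _ ≤ ‖mc a k‖ * ((k:ℝ) * r^(k-1)) := by
        apply mul_le_mul_of_nonneg_left _ (norm_nonneg _)
        exact mul_le_mul_of_nonneg_left (pow_le_pow_left₀ (norm_nonneg w) hwr _) (Nat.cast_nonneg k)
    _ = u k := by rw [hu_def]; ring
  have hg0 : Summable fun k => mc a k * (0:ℂ)^k := by
    apply summable_of_ne_finset_zero (s := {0})
    intro k hk
    simp only [Finset.mem_singleton] at hk
    simp [zero_pow hk]
  set F : ℂ → ℂ := fun w => ∑' (k:ℕ), mc a k * w^k with hF_def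
  have hFderiv : ∀ w ∈ Metric.ball (0:ℂ) r,
      HasDerivAt F (∑' (k:ℕ), mc a k * ((k:ℂ) * w^(k-1))) w :=
    fun w hw => hasDerivAt_tsum_of_isPreconnected hu Metric.isOpen_ball
      (convex_ball (0:ℂ) r).isPreconnected (fun k y _ => hg k y) (fun k y hy => hbound k y hy)
      (Metric.mem_ball_self hr0) hg0 hw
  have hmem : ∀ t:ℝ, 0 ≤ t → t ≤ z → (t:ℂ) ∈ Metric.ball (0:ℂ) r := by
    intro t ht0 htz
    simp only [Metric.mem_ball, dist_zero_right, Complex.norm_real, Real.norm_eq_abs,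
      abs_of_nonneg ht0]
    linarith
  have hsumD : ∀ t:ℝ, 0 ≤ t → t ≤ z →
      Summable (fun k => mc a k * ((k:ℂ) * (t:ℂ)^(k-1))) := fun t ht0 htz =>
    Summable.of_norm_bounded hu (fun k => hbound k _ (hmem t ht0 htz))
  have hsumF : ∀ t:ℝ, 0 ≤ t → t ≤ z → Summable (fun k => mc a k * (t:ℂ)^k) := by
    intro t ht0 htz
    apply Summable.of_norm_bounded_eventually_nat hu
    filter_upwards [eventually_ge_atTop 1] with k hk
    have hk1 : (1:ℝ) ≤ k := by exact_mod_cast hk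
    calc ‖mc a k * (t:ℂ)^k‖ = ‖mc a k‖ * ‖(t:ℂ)‖^k := by rw [norm_mul, norm_pow]
    _ ≤ ‖mc a k‖ * r^k := by
        apply mul_le_mul_of_nonneg_left _ (norm_nonneg _)
        apply pow_le_pow_left₀ (norm_nonneg _)
        simpa [Complex.norm_real, Real.norm_eq_abs, abs_of_nonneg ht0] using le_of_lt (lt_of_le_of_lt htz hzr)
    _ = ‖mc a k‖ * (r^(k-1) * r) := by
        congr 1
        conv_lhs => rw [show k = (k-1)+1 by omega]
        rw [pow_succ]
    _ ≤ ‖mc a k‖ * (r^(k-1) * k) := by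
        apply mul_le_mul_of_nonneg_left _ (norm_nonneg _)
        exact mul_le_mul_of_nonneg_left (by linarith [hr1]) (by positivity)
    _ = u k := by rw [hu_def]; ring
  have hrel : ∀ t:ℝ, 0 ≤ t → t ≤ z →
      (1 - (t:ℂ)) * (∑' (k:ℕ), mc a k * ((k:ℂ) * (t:ℂ)^(k-1))) = a * F (t:ℂ) := by
    intro t ht0 htz
    have hS := hsumD t ht0 htz
    have hshift : ∀ k:ℕ, mc a (k+1) * (((k+1:ℕ):ℂ) * (t:ℂ)^((k+1)-1))
        = (a + (k:ℂ)) * (mc a k * (t:ℂ)^k) := by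
      intro k
      have : mc a (k+1) * (((k+1:ℕ):ℂ)) = mc a k * (a + k) := by
        push_cast
        exact mc_succ_mul a k
      rw [Nat.add_sub_cancel, ← mul_assoc, this]
      ring
    have h1 : (∑' (k:ℕ), mc a k * ((k:ℂ) * (t:ℂ)^(k-1)))
        = ∑' (k:ℕ), (a + (k:ℂ)) * (mc a k * (t:ℂ)^k) := by
      rw [hS.tsum_eq_zero_add]
      simp only [Nat.cast_zero, zero_mul, mul_zero, zero_add]
      exact tsum_congr fun k => by
        have := hshift k
        push_cast at this ⊢
        exact this
    have hS1 : Summable (fun k : ℕ => (a + (k:ℂ)) * (mc a k * (t:ℂ)^k)) := by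
      have h' := (summable_nat_add_iff 1).mpr hS
      apply h'.congr
      intro k
      have := hshift k
      push_cast at this ⊢
      exact this
    have hS2 : Summable (fun k : ℕ => (k:ℂ) * (mc a k * (t:ℂ)^k)) := by
      apply (hS.mul_left (t:ℂ)).congr
      intro k
      cases k with
      | zero => simp
      | succ j =>
        simp only [Nat.add_sub_cancel]
        push_cast
        rw [pow_succ]
        ring
    have h2 : (t:ℂ) * (∑' (k:ℕ), mc a k * ((k:ℂ) * (t:ℂ)^(k-1)))
        = ∑' (k:ℕ), (k:ℂ) * (mc a k * (t:ℂ)^k) := by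
      rw [← tsum_mul_left]
      exact tsum_congr fun k => by
        cases k with
        | zero => simp
        | succ j =>
          simp only [Nat.add_sub_cancel]
          push_cast
          rw [pow_succ]
          ring
    calc (1 - (t:ℂ)) * (∑' (k:ℕ), mc a k * ((k:ℂ) * (t:ℂ)^(k-1)))
        = (∑' (k:ℕ), mc a k * ((k:ℂ) * (t:ℂ)^(k-1))) - (t:ℂ) * (∑' (k:ℕ), mc a k * ((k:ℂ) * (t:ℂ)^(k-1))) := by ring
    _ = (∑' (k:ℕ), (a + (k:ℂ)) * (mc a k * (t:ℂ)^k)) - (∑' (k:ℕ), (k:ℂ) * (mc a k * (t:ℂ)^k)) := by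
        rw [h2, h1]
    _ = ∑' (k:ℕ), ((a + (k:ℂ)) * (mc a k * (t:ℂ)^k) - (k:ℂ) * (mc a k * (t:ℂ)^k)) := (Summable.tsum_sub hS1 hS2).symm
    _ = ∑' (k:ℕ), a * (mc a k * (t:ℂ)^k) := tsum_congr fun k => by ring
    _ = a * F (t:ℂ) := by rw [hF_def]; exact tsum_mul_left
  set H : ℝ → ℂ := fun t => (1 - (t:ℂ))^a * F (t:ℂ) with hH_def
  have hHd : ∀ t ∈ Set.Icc (0:ℝ) z, HasDerivAt H 0 t := by
    intro t ht
    obtain ⟨ht0, htz⟩ := ht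
    have hne : (1:ℂ) - t ≠ 0 := by
      intro h
      have := congrArg Complex.re h
      simp only [Complex.sub_re, Complex.one_re, Complex.ofReal_re, Complex.zero_re] at this
      linarith
    have hslit : (1:ℂ) - t ∈ Complex.slitPlane := by
      rw [Complex.mem_slitPlane_iff]
      left
      simp only [Complex.sub_re, Complex.one_re, Complex.ofReal_re]
      linarith
    have hb : HasDerivAt (fun t:ℝ => 1 - (t:ℂ)) (-1) t := by
      simpa using (Complex.ofRealCLM.hasDerivAt (x := t)).const_sub 1
    have hbC : HasDerivAt (fun w:ℂ => 1 - w) (-1) (t:ℂ) := by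
      simpa using (hasDerivAt_id (t:ℂ)).const_sub 1
    have hcp : HasDerivAt (fun t:ℝ => (1 - (t:ℂ))^a) (a * (1 - (t:ℂ))^(a-1) * (-1)) t :=
      (HasDerivAt.cpow_const hbC hslit).comp_ofReal
    have hFd : HasDerivAt (fun t:ℝ => F (t:ℂ)) (∑' (k:ℕ), mc a k * ((k:ℂ) * (t:ℂ)^(k-1))) t :=
      (hFderiv _ (hmem t ht0 htz)).comp_ofReal
    have hprod := hcp.mul hFd
    have : (a * (1 - (t:ℂ))^(a-1) * (-1)) * F (t:ℂ)
        + (1 - (t:ℂ))^a * (∑' (k:ℕ), mc a k * ((k:ℂ) * (t:ℂ)^(k-1))) = 0 := by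
      have hsplit : (1 - (t:ℂ))^a = (1 - (t:ℂ))^(a-1) * (1 - (t:ℂ)) := by
        conv_lhs => rw [show a = (a-1)+1 by ring]
        rw [Complex.cpow_add _ _ hne, Complex.cpow_one]
      rw [hsplit]
      linear_combination ((1 - (t:ℂ))^(a-1)) * hrel t ht0 htz
    rw [this] at hprod
    exact hprod
  have hcont : ContinuousOn H (Set.Icc 0 z) :=
    fun t ht => ((hHd t ht).continuousAt).continuousWithinAt
  have hconst := constant_of_has_deriv_right_zero hcont
    (fun t ht => ((hHd t (Set.mem_Icc_of_Ico ht)).hasDerivWithinAt))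
  have hz' := hconst z (Set.right_mem_Icc.2 h0)
  have hF0 : F 0 = 1 := by
    have e : F 0 = ∑' (k:ℕ), mc a k * (0:ℂ)^k := rfl
    rw [e, tsum_eq_single 0 (fun k hk => by simp [zero_pow hk])]
    simp [mc_zero]
  have hH0 : H 0 = 1 := by
    have e : H 0 = (1 - ((0:ℝ):ℂ))^a * F ((0:ℝ):ℂ) := rfl
    rw [e]
    push_cast
    rw [sub_zero, Complex.one_cpow]
    simpa using hF0
  rw [hH0] at hz'
  have hz'' : ((1:ℂ) - z)^a * F (z:ℂ) = 1 := hz'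
  have hXne : ((1:ℂ) - z) ≠ 0 := by
    intro h
    have := congrArg Complex.re h
    simp only [Complex.sub_re, Complex.one_re, Complex.ofReal_re, Complex.zero_re] at this
    linarith
  have hFz : F (z:ℂ) = ((1:ℂ) - z)^(-a) := by
    rw [Complex.cpow_neg]
    exact eq_inv_of_mul_eq_one_right hz''
  have hfinal : (((1 - z : ℝ)) : ℂ) ^ (-a) = F (z:ℂ) := by
    rw [hFz]
    norm_cast
  rw [hfinal]
  exact (hsumF z h0 le_rfl).hasSum


lemma sum_choose_neg (k:ℕ) (y:ℂ) :
    ∑ j ∈ range (k+1), (-1:ℂ)^j * (k.choose j) * y^j = (1-y)^k := by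
  have h := add_pow (-y) 1 k
  rw [neg_add_eq_sub] at h
  rw [h]
  apply Finset.sum_congr rfl
  intro j hj
  rw [one_pow, neg_pow]
  ring

lemma sum_choose_jneg (k:ℕ) (y:ℂ) :
    ∑ j ∈ range (k+1), (-1:ℂ)^j * (k.choose j) * j * y^j = -(k:ℂ) * y * (1-y)^(k-1) := by
  cases k with
  | zero => simp
  | succ m =>
    rw [Finset.sum_range_succ']
    have e0 : (-1:ℂ)^0 * ((m+1).choose 0 : ℂ) * (0:ℕ) * y^0 = 0 := by simp
    have step : ∀ i, (-1:ℂ)^(i+1) * (((m+1).choose (i+1) : ℕ):ℂ) * ((i+1 : ℕ):ℂ) * y^(i+1)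
        = (-((m:ℂ)+1) * y) * ((-1:ℂ)^i * (m.choose i) * y^i) := by
      intro i
      have hc : (((m+1).choose (i+1) : ℕ):ℂ) * ((i+1:ℕ):ℂ) = ((m:ℂ)+1) * (m.choose i) := by
        have := (Nat.add_one_mul_choose_eq m i).symm
        have h2 : (((m+1).choose (i+1) * (i+1) : ℕ) : ℂ) = ((Nat.succ m * m.choose i : ℕ) : ℂ) := by
          exact_mod_cast congrArg (Nat.cast : ℕ → ℂ) this
        push_cast at h2
        push_cast
        linear_combination h2
      rw [pow_succ, pow_succ]
      linear_combination (-((-1:ℂ)^i * y^i * y)) * hc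
    calc (∑ i ∈ range (m+1), (-1:ℂ)^(i+1) * (((m+1).choose (i+1):ℕ):ℂ) * ((i+1:ℕ):ℂ) * y^(i+1))
          + (-1:ℂ)^0 * ((m+1).choose 0 : ℂ) * ((0:ℕ):ℂ) * y^0
        = ∑ i ∈ range (m+1), (-((m:ℂ)+1) * y) * ((-1:ℂ)^i * (m.choose i) * y^i) := by
          rw [Finset.sum_congr rfl (fun i _ => step i)]
          simp
    _ = (-((m:ℂ)+1) * y) * ∑ i ∈ range (m+1), (-1:ℂ)^i * (m.choose i) * y^i := by
          rw [Finset.mul_sum]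
    _ = -((m:ℂ)+1) * y * (1-y)^m := by rw [sum_choose_neg]
    _ = -((m+1:ℕ):ℂ) * y * (1-y)^(m+1-1) := by push_cast; simp
lemma key_id (k:ℕ) (y:ℂ) :
    ∑ j ∈ range (k+1), (-1:ℂ)^j * (k.choose j) * (2*(j:ℂ)+1) * y^(j+1)
      = y * (1-y)^k - 2*(k:ℂ)*y^2*(1-y)^(k-1) := by
  have expand : ∀ j, (-1:ℂ)^j * (k.choose j) * (2*(j:ℂ)+1) * y^(j+1)
      = y * ((-1:ℂ)^j * (k.choose j) * y^j) + (2*y) * ((-1:ℂ)^j * (k.choose j) * j * y^j) := by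
    intro j
    rw [pow_succ]
    ring
  rw [Finset.sum_congr rfl (fun j _ => expand j), Finset.sum_add_distrib,
    ← Finset.mul_sum, ← Finset.mul_sum, sum_choose_neg, sum_choose_jneg]
  ring

noncomputable def uu (n : ℕ) : ℝ := (((n:ℝ)+1)^2)⁻¹

lemma uu_pos (n : ℕ) : 0 < uu n := by unfold uu; positivity

lemma uu_le_one (n : ℕ) : uu n ≤ 1 := by
  unfold uu
  rw [inv_le_one_iff₀]
  right
  nlinarith [Nat.cast_nonneg (α := ℝ) n]

lemma summable_uu : Summable uu := by
  have h : Summable (fun n : ℕ => ((n:ℝ)^2)⁻¹) := by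
    simpa using Real.summable_one_div_nat_pow.mpr (by norm_num : 1 < 2)
  have := (summable_nat_add_iff 1).mpr h
  apply this.congr
  intro n
  unfold uu
  push_cast
  ring_nf

lemma summable_uu_pow (j : ℕ) : Summable (fun n => (uu n : ℂ)^(j+1)) := by
  apply Summable.of_norm_bounded summable_uu
  intro n
  rw [norm_pow, Complex.norm_real, Real.norm_eq_abs, abs_of_pos (uu_pos n)]
  calc (uu n)^(j+1) ≤ (uu n)^1 :=
    pow_le_pow_of_le_one (uu_pos n).le (uu_le_one n) (by omega)
  _ = uu n := pow_one _

lemma zeta_term (j : ℕ) :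
    riemannZeta (2*(j:ℂ)+2) = ∑' (n:ℕ), (uu n : ℂ)^(j+1) := by
  have hre : 1 < (2*(j:ℂ)+2).re := by
    have : (2*(j:ℂ)+2) = ((2*j+2 : ℕ):ℂ) := by push_cast; ring
    rw [this, Complex.natCast_re]
    have : (2:ℝ) ≤ ((2*j+2 : ℕ):ℝ) := by push_cast; linarith [Nat.cast_nonneg (α := ℝ) j]
    linarith
  rw [zeta_eq_tsum_one_div_nat_add_one_cpow hre]
  apply tsum_congr
  intro n
  have h1 : (2*(j:ℂ)+2) = ((2*j+2 : ℕ):ℂ) := by push_cast; ring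
  rw [h1, Complex.cpow_natCast]
  have h2 : (uu n : ℂ) = (((n:ℂ)+1)^2)⁻¹ := by
    unfold uu
    push_cast
    ring
  rw [h2, ← inv_pow, ← pow_mul, one_div, show 2*(j+1) = 2*j+2 from by ring, inv_pow]

lemma A_eq (k : ℕ) :
    (∑ j ∈ Finset.range (k + 1),
      (-1) ^ j * (k.choose j : ℂ) * (2 * (j : ℂ) + 1) * riemannZeta (2 * (j : ℂ) + 2))
    = ∑' (n:ℕ), ∑ j ∈ range (k+1), (-1:ℂ)^j * (k.choose j) * (2*(j:ℂ)+1) * (uu n:ℂ)^(j+1) := by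
  calc ∑ j ∈ Finset.range (k + 1),
      (-1) ^ j * (k.choose j : ℂ) * (2 * (j : ℂ) + 1) * riemannZeta (2 * (j : ℂ) + 2)
      = ∑ j ∈ range (k+1), ∑' (n:ℕ),
          (-1:ℂ)^j * (k.choose j) * (2*(j:ℂ)+1) * (uu n:ℂ)^(j+1) := by
        apply Finset.sum_congr rfl
        intro j hj
        rw [zeta_term j]
        exact tsum_mul_left.symm
  _ = ∑' (n:ℕ), ∑ j ∈ range (k+1), (-1:ℂ)^j * (k.choose j) * (2*(j:ℂ)+1) * (uu n:ℂ)^(j+1) :=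
      (Summable.tsum_finsetSum (fun j _ => ((summable_uu_pow j).mul_left _))).symm

noncomputable def WW (n k : ℕ) : ℂ :=
  (uu n : ℂ) * ((1:ℂ) - (uu n:ℂ))^k - 2*(k:ℂ)*(uu n:ℂ)^2 * ((1:ℂ) - (uu n:ℂ))^(k-1)

lemma W_eq_inner (n k : ℕ) :
    ∑ j ∈ range (k+1), (-1:ℂ)^j * (k.choose j) * (2*(j:ℂ)+1) * (uu n:ℂ)^(j+1) = WW n k := by
  rw [key_id, WW]

lemma cpow_real_pos (r : ℝ) (hr : 0 < r) (w : ℂ) :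
    (r:ℂ)^w = Complex.exp (w * (Real.log r : ℂ)) := by
  have hne : (r:ℂ) ≠ 0 := by exact_mod_cast hr.ne'
  rw [Complex.cpow_def_of_ne_zero hne, ← Complex.ofReal_log hr.le, mul_comm]

lemma hasSum_per_n (s : ℂ) (n : ℕ) :
    HasSum (fun k => mc (1 - s/2) k * WW n k) ((s - 1) * (1 / ((n:ℂ)+1)^s)) := by
  set a : ℂ := 1 - s/2 with ha
  set z : ℝ := 1 - uu n with hz
  have hz0 : 0 ≤ z := by rw [hz]; linarith [uu_le_one n]
  have hz1 : z < 1 := by rw [hz]; linarith [uu_pos n]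
  have h1mz : (1 - z : ℝ) = uu n := by rw [hz]; ring
  have hzc : (z:ℂ) = 1 - (uu n:ℂ) := by rw [hz]; push_cast; ring
  have B1 : HasSum (fun k => mc a k * (z:ℂ)^k) ((uu n : ℂ)^(-a)) := by
    have h := hasSum_binom a hz0 hz1
    rwa [h1mz] at h
  have B2 : HasSum (fun k => mc (a+1) k * (z:ℂ)^k) ((uu n : ℂ)^(-(a+1))) := by
    have h := hasSum_binom (a+1) hz0 hz1
    rwa [h1mz] at h
  have B2' : HasSum (fun k : ℕ => mc a (k+1) * (((k:ℂ))+1) * (z:ℂ)^k)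
      (a * (uu n:ℂ)^(-(a+1))) := by
    have h := B2.mul_left a
    have e : (fun k : ℕ => a * (mc (a+1) k * (z:ℂ)^k))
        = fun k : ℕ => mc a (k+1) * (((k:ℂ))+1) * (z:ℂ)^k := by
      funext k
      rw [show mc a (k+1) * (((k:ℂ))+1) = ((k:ℂ)+1) * mc a (k+1) from by ring, mc_shift]
      ring
    rwa [e] at h
  have B3 : HasSum (fun k : ℕ => mc a k * (k:ℂ) * (z:ℂ)^(k-1)) (a * (uu n:ℂ)^(-(a+1))) := by
    have e : (fun k : ℕ => mc a (k+1) * (((k:ℂ))+1) * (z:ℂ)^k)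
        = fun k : ℕ => mc a (k+1) * ((k+1 : ℕ):ℂ) * (z:ℂ)^((k+1)-1) := by
      funext k
      push_cast
      rfl
    rw [e] at B2'
    have h := (hasSum_nat_add_iff (f := fun k : ℕ => mc a k * (k:ℂ) * (z:ℂ)^(k-1)) 1).mp B2'
    simpa using h
  have H := (B1.mul_left ((uu n:ℂ))).sub (B3.mul_left (2*(uu n:ℂ)^2))
  have e : (fun k : ℕ => (uu n:ℂ) * (mc a k * (z:ℂ)^k)
      - 2*(uu n:ℂ)^2 * (mc a k * (k:ℂ) * (z:ℂ)^(k-1))) = fun k => mc a k * WW n k := by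
    funext k
    rw [WW, ← hzc]
    ring
  rw [e] at H
  have main_val : (uu n:ℂ) * ((uu n:ℂ)^(-a)) - 2*(uu n:ℂ)^2 * (a * (uu n:ℂ)^(-(a+1)))
      = (s-1) * (1/((n:ℂ)+1)^s) := by
    have hup := uu_pos n
    set lb : ℝ := Real.log ((n:ℝ)+1) with hlb
    have hLu : (Real.log (uu n) : ℂ) = -(2*(lb:ℂ)) := by
      unfold uu
      rw [Real.log_inv, Real.log_pow]
      push_cast
      ring
    have hbpos : (0:ℝ) < (n:ℝ)+1 := by positivity
    have e_cp : ∀ w:ℂ, (uu n:ℂ)^w = Complex.exp (w * -(2*(lb:ℂ))) := by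
      intro w
      rw [cpow_real_pos (uu n) hup w, hLu]
    have e_u : (uu n:ℂ) = Complex.exp (-(2*(lb:ℂ))) := by
      have h := e_cp 1
      rwa [Complex.cpow_one, one_mul] at h
    have e_b : 1/((n:ℂ)+1)^s = Complex.exp (-(s * (lb:ℂ))) := by
      have hcast : ((((n:ℝ)+1) : ℝ):ℂ) = (n:ℂ)+1 := by push_cast; ring
      rw [← hcast, cpow_real_pos _ hbpos s, one_div, ← Complex.exp_neg, hlb]
    rw [e_cp (-a), e_cp (-(a+1)), e_b, e_u]
    have m1 : Complex.exp (-(2*(lb:ℂ))) * Complex.exp ((-a) * -(2*(lb:ℂ)))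
        = Complex.exp (-(s*(lb:ℂ))) := by
      rw [← Complex.exp_add]
      congr 1
      rw [ha]
      ring
    have m2 : (Complex.exp (-(2*(lb:ℂ))))^2 * Complex.exp ((-(a+1)) * -(2*(lb:ℂ)))
        = Complex.exp (-(s*(lb:ℂ))) := by
      rw [sq, mul_assoc, ← Complex.exp_add, ← Complex.exp_add]
      congr 1
      rw [ha]
      ring
    calc Complex.exp (-(2*(lb:ℂ))) * Complex.exp ((-a) * -(2*(lb:ℂ)))
          - 2*(Complex.exp (-(2*(lb:ℂ))))^2 * (a * Complex.exp ((-(a+1)) * -(2*(lb:ℂ))))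
        = (Complex.exp (-(2*(lb:ℂ))) * Complex.exp ((-a) * -(2*(lb:ℂ))))
          - 2*a*((Complex.exp (-(2*(lb:ℂ))))^2 * Complex.exp ((-(a+1)) * -(2*(lb:ℂ)))) := by
          ring
    _ = Complex.exp (-(s*(lb:ℂ))) - 2*a*Complex.exp (-(s*(lb:ℂ))) := by rw [m1, m2]
    _ = (s-1) * Complex.exp (-(s*(lb:ℂ))) := by rw [ha]; ring
  rwa [main_val] at H

lemma log_le_harmonic : ∀ k : ℕ, Real.log ((k:ℝ)+1) ≤ ∑ j ∈ range k, 1/((j:ℝ)+1) := by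
  intro k
  induction k with
  | zero => simp
  | succ k ih =>
    rw [Finset.sum_range_succ]
    have h1 : Real.log (((k+1:ℕ):ℝ)+1) = Real.log ((k:ℝ)+1) + Real.log (((k:ℝ)+2)/((k:ℝ)+1)) := by
      rw [← Real.log_mul (by positivity) (by positivity)]
      congr 1
      push_cast
      field_simp
      ring
    have h2 : Real.log (((k:ℝ)+2)/((k:ℝ)+1)) ≤ 1/((k:ℝ)+1) := by
      have h3 := Real.log_le_sub_one_of_pos (show (0:ℝ) < ((k:ℝ)+2)/((k:ℝ)+1) by positivity)
      have e : ((k:ℝ)+2)/((k:ℝ)+1) - 1 = 1/((k:ℝ)+1) := by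
        field_simp
        norm_num
      rw [e] at h3
      exact h3
    rw [h1]
    linarith

lemma mc_norm_bound (a : ℂ) {β : ℝ} (hβ0 : 0 < β) (hβ1 : β < 1) (hre : a.re < 1 - β) :
    ∃ M : ℝ, 1 ≤ M ∧ ∀ k : ℕ, ‖mc a k‖ ≤ M * ((k:ℝ)+1)^(-β) := by
  set v : ℕ → ℝ := fun k => ∏ j ∈ range k, (1 - β/((j:ℝ)+1)) with hv
  have hfac_pos : ∀ j : ℕ, 0 < 1 - β/((j:ℝ)+1) := by
    intro j
    have : β/((j:ℝ)+1) ≤ β/1 := by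
      apply div_le_div_of_nonneg_left hβ0.le one_pos
      linarith [Nat.cast_nonneg (α := ℝ) j]
    simp at this
    linarith
  have hv_pos : ∀ k, 0 < v k := fun k => Finset.prod_pos (fun j _ => hfac_pos j)
  have hv_le : ∀ k, v k ≤ ((k:ℝ)+1)^(-β) := by
    intro k
    have step1 : v k ≤ ∏ j ∈ range k, Real.exp (-(β/((j:ℝ)+1))) := by
      apply Finset.prod_le_prod (fun j _ => (hfac_pos j).le)
      intro j _
      have := Real.add_one_le_exp (-(β/((j:ℝ)+1)))
      linarith
    have step2 : ∏ j ∈ range k, Real.exp (-(β/((j:ℝ)+1)))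
        = Real.exp (-β * ∑ j ∈ range k, 1/((j:ℝ)+1)) := by
      rw [← Real.exp_sum]
      congr 1
      rw [Finset.mul_sum]
      apply Finset.sum_congr rfl
      intro j _
      field_simp
    have step3 : Real.exp (-β * ∑ j ∈ range k, 1/((j:ℝ)+1))
        ≤ Real.exp (-β * Real.log ((k:ℝ)+1)) := by
      apply Real.exp_le_exp.mpr
      have := log_le_harmonic k
      nlinarith
    have step4 : Real.exp (-β * Real.log ((k:ℝ)+1)) = ((k:ℝ)+1)^(-β) := by
      rw [Real.rpow_def_of_pos (by positivity), mul_comm]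
    calc v k ≤ ∏ j ∈ range k, Real.exp (-(β/((j:ℝ)+1))) := step1
    _ = Real.exp (-β * ∑ j ∈ range k, 1/((j:ℝ)+1)) := step2
    _ ≤ Real.exp (-β * Real.log ((k:ℝ)+1)) := step3
    _ = ((k:ℝ)+1)^(-β) := step4
  set δ : ℝ := 1 - β - a.re with hδ
  have hδ0 : 0 < δ := by rw [hδ]; linarith
  obtain ⟨K, hK⟩ := exists_nat_ge ((a.im)^2/(2*δ) + |a.re|)
  have habk : ∀ k:ℕ, (K:ℝ) ≤ (k:ℝ) → ‖a + (k:ℂ)‖ ≤ (k:ℝ)+1-β := by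
    intro k hk
    have hp : (a.im)^2/(2*δ) ≤ (k:ℝ) + a.re := by
      have h2 : -|a.re| ≤ a.re := neg_abs_le a.re
      linarith
    have hp0 : 0 ≤ (k:ℝ) + a.re := by
      have : 0 ≤ (a.im)^2/(2*δ) := by positivity
      linarith
    have him : (a.im)^2 ≤ 2*((k:ℝ) + a.re)*δ := by
      rw [div_le_iff₀ (by linarith)] at hp
      linarith
    have hsq : ‖a + (k:ℂ)‖^2 ≤ ((k:ℝ)+1-β)^2 := by
      have e1 : ‖a + (k:ℂ)‖^2 = (a.re + k)^2 + (a.im)^2 := by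
        rw [Complex.sq_norm, Complex.normSq_apply]
        simp [Complex.add_re, Complex.add_im, Complex.natCast_re, Complex.natCast_im]
        ring
      rw [e1]
      have e2 : (k:ℝ)+1-β = ((k:ℝ) + a.re) + δ := by rw [hδ]; ring
      rw [e2]
      nlinarith
    have h1 : 0 ≤ (k:ℝ)+1-β := by
      have e2 : (k:ℝ)+1-β = ((k:ℝ) + a.re) + δ := by rw [hδ]; ring
      linarith
    nlinarith [norm_nonneg (a + (k:ℂ))]
  set M : ℝ := (∑ j ∈ range (K+1), ‖mc a j‖ / v j) + 1 with hM
  have hM1 : 1 ≤ M := by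
    rw [hM]
    have : 0 ≤ ∑ j ∈ range (K+1), ‖mc a j‖ / v j :=
      Finset.sum_nonneg (fun j _ => div_nonneg (norm_nonneg _) (hv_pos j).le)
    linarith
  have hsmall : ∀ j : ℕ, j ≤ K → ‖mc a j‖ ≤ M * v j := by
    intro j hj
    have hmem : j ∈ range (K+1) := Finset.mem_range.mpr (by omega)
    have h1 : ‖mc a j‖ / v j ≤ ∑ i ∈ range (K+1), ‖mc a i‖ / v i :=
      Finset.single_le_sum (fun i _ => div_nonneg (norm_nonneg _) (hv_pos i).le) hmem
    have h2 : ‖mc a j‖ / v j ≤ M := by rw [hM]; linarith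
    calc ‖mc a j‖ = (‖mc a j‖ / v j) * v j := by field_simp [(hv_pos j).ne']
    _ ≤ M * v j := mul_le_mul_of_nonneg_right h2 (hv_pos j).le
  have main : ∀ k, ‖mc a k‖ ≤ M * v k := by
    intro k
    induction k with
    | zero => exact hsmall 0 (Nat.zero_le K)
    | succ k ih =>
      by_cases hk : k + 1 ≤ K
      · exact hsmall (k+1) hk
      · have hkK : (K:ℝ) ≤ (k:ℝ) := by exact_mod_cast (by omega : K ≤ k)
        have hkp : (0:ℝ) < (k:ℝ)+1 := by positivity
        have hvs : v (k+1) = v k * (((k:ℝ)+1-β)/((k:ℝ)+1)) := by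
          show (∏ j ∈ range (k+1), (1 - β/((j:ℝ)+1))) = (∏ j ∈ range k, (1 - β/((j:ℝ)+1))) * (((k:ℝ)+1-β)/((k:ℝ)+1))
          rw [Finset.prod_range_succ]
          congr 1
          field_simp
        rw [norm_mc_succ, hvs]
        rw [div_le_iff₀ hkp]
        have hb := habk k hkK
        have h1β : 0 ≤ (k:ℝ)+1-β := by linarith
        calc ‖mc a k‖ * ‖a + (k:ℂ)‖ ≤ (M * v k) * ((k:ℝ)+1-β) := by
              apply mul_le_mul ih hb (norm_nonneg _)
              exact mul_nonneg (by linarith) (hv_pos k).le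
        _ = M * (v k * (((k:ℝ)+1-β)/((k:ℝ)+1))) * ((k:ℝ)+1) := by
              field_simp
  refine ⟨M, hM1, fun k => ?_⟩
  calc ‖mc a k‖ ≤ M * v k := main k
  _ ≤ M * ((k:ℝ)+1)^(-β) := mul_le_mul_of_nonneg_left (hv_le k) (by linarith)

lemma exp_neg_le_rpow {γ t : ℝ} (hγ0 : 0 < γ) (hγ1 : γ ≤ 1) (ht : 0 < t) :
    Real.exp (-t) ≤ t^(-γ) := by
  have h1 : t^γ ≤ Real.exp t := by
    rcases le_total t 1 with h | h
    · calc t^γ ≤ 1 := Real.rpow_le_one ht.le h hγ0.le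
      _ ≤ Real.exp t := by linarith [Real.add_one_le_exp t]
    · calc t^γ ≤ t^(1:ℝ) := Real.rpow_le_rpow_of_exponent_le h hγ1
      _ = t := Real.rpow_one t
      _ ≤ Real.exp t := by linarith [Real.add_one_le_exp t]
  have h2 : 0 < t^γ := Real.rpow_pos_of_pos ht γ
  rw [Real.exp_neg, Real.rpow_neg ht.le]
  exact inv_anti₀ h2 h1

lemma master_bound (a : ℂ) (M β γ : ℝ) (hM : ∀ k:ℕ, ‖mc a k‖ ≤ M * ((k:ℝ)+1)^(-β))
    (hM1 : 1 ≤ M) (hγ0 : 0 < γ) (hγ1 : γ ≤ 1) (n k : ℕ) :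
    ‖mc a k * WW n k‖ ≤ (16 * Real.exp 1 * M) * (uu n)^(1-γ) * ((k:ℝ)+1)^(-(β+γ)) := by
  have hu0 := uu_pos n
  have hu1 := uu_le_one n
  have he1 : (1:ℝ) ≤ Real.exp 1 := by linarith [Real.add_one_le_exp (1:ℝ)]
  have huγ : uu n ≤ (uu n)^(1-γ) := by
    calc uu n = (uu n)^(1:ℝ) := (Real.rpow_one _).symm
    _ ≤ (uu n)^(1-γ) := Real.rpow_le_rpow_of_exponent_ge hu0 hu1 (by linarith)
  rcases Nat.eq_zero_or_pos k with hk0 | hk1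
  · subst hk0
    have hW0 : WW n 0 = ((uu n : ℝ) : ℂ) := by simp [WW]
    rw [mc_zero, one_mul, hW0]
    have hnorm : ‖((uu n : ℝ) : ℂ)‖ = uu n := by
      rw [Complex.norm_real, Real.norm_eq_abs, abs_of_pos hu0]
    rw [hnorm]
    simp only [Nat.cast_zero, zero_add, Real.one_rpow, mul_one]
    calc uu n ≤ (uu n)^(1-γ) := huγ
    _ = 1 * (uu n)^(1-γ) := (one_mul _).symm
    _ ≤ (16 * Real.exp 1 * M) * (uu n)^(1-γ) := by
        apply mul_le_mul_of_nonneg_right _ (Real.rpow_nonneg hu0.le _)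
        nlinarith
  · set u : ℝ := uu n with hu_def
    set z : ℝ := 1 - u with hz_def
    have hz0 : 0 ≤ z := by rw [hz_def]; linarith
    have hz1 : z ≤ 1 := by rw [hz_def]; linarith
    have hk1' : (1:ℝ) ≤ (k:ℝ) := by exact_mod_cast hk1
    have hzc : ((1:ℂ) - (u:ℂ)) = ((z:ℝ):ℂ) := by rw [hz_def]; push_cast; ring
    have hW : ‖WW n k‖ ≤ u * z^(k-1) * (1 + 2*(k:ℝ)*u) := by
      have e1 : ‖WW n k‖ ≤ u * z^k + 2*(k:ℝ)*u^2 * z^(k-1) := by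
        rw [WW, hzc]
        calc ‖(u:ℂ) * ((z:ℝ):ℂ)^k - 2*(k:ℂ)*(u:ℂ)^2 * ((z:ℝ):ℂ)^(k-1)‖
            ≤ ‖(u:ℂ) * ((z:ℝ):ℂ)^k‖ + ‖2*(k:ℂ)*(u:ℂ)^2 * ((z:ℝ):ℂ)^(k-1)‖ := norm_sub_le _ _
        _ = u * z^k + 2*(k:ℝ)*u^2 * z^(k-1) := by
            rw [norm_mul, norm_mul, norm_mul, norm_mul, norm_pow, norm_pow, norm_pow]
            simp only [Complex.norm_real, Complex.norm_natCast, Real.norm_eq_abs,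
              Complex.norm_ofNat]
            rw [abs_of_pos hu0, abs_of_nonneg hz0]
      have e2 : u * z^k + 2*(k:ℝ)*u^2 * z^(k-1) = u * z^(k-1) * (z + 2*(k:ℝ)*u) := by
        have h : z^k = z^(k-1) * z := by
          conv_lhs => rw [show k = (k-1)+1 by omega]
          rw [pow_succ]
        rw [h]
        ring
      have e3 : u * z^(k-1) * (z + 2*(k:ℝ)*u) ≤ u * z^(k-1) * (1 + 2*(k:ℝ)*u) := by
        apply mul_le_mul_of_nonneg_left _ (by positivity)
        linarith
      linarith
    have hZ : z^(k-1) ≤ Real.exp 1 * Real.exp (-(u*(k:ℝ))) := by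
      have h1 : z ≤ Real.exp (-u) := by
        have := Real.add_one_le_exp (-u)
        rw [hz_def]
        linarith
      have h2 : z^(k-1) ≤ (Real.exp (-u))^(k-1) := pow_le_pow_left₀ hz0 h1 _
      have h3 : (Real.exp (-u))^(k-1) = Real.exp (((k-1:ℕ):ℝ) * (-u)) :=
        (Real.exp_nat_mul _ _).symm
      have h4 : ((k-1:ℕ):ℝ) = (k:ℝ) - 1 := by
        push_cast [Nat.cast_sub hk1]
        ring
      have h5 : Real.exp (((k:ℝ)-1) * (-u)) = Real.exp u * Real.exp (-(u*(k:ℝ))) := by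
        rw [← Real.exp_add]
        congr 1
        ring
      have h6 : Real.exp u ≤ Real.exp 1 := Real.exp_le_exp.mpr hu1
      calc z^(k-1) ≤ Real.exp (((k-1:ℕ):ℝ) * (-u)) := by rw [← h3]; exact h2
      _ = Real.exp u * Real.exp (-(u*(k:ℝ))) := by rw [h4, h5]
      _ ≤ Real.exp 1 * Real.exp (-(u*(k:ℝ))) :=
          mul_le_mul_of_nonneg_right h6 (Real.exp_nonneg _)
    have hQ : 1 + 2*(k:ℝ)*u ≤ 4 * Real.exp (u*(k:ℝ)/2) := by
      have h := Real.add_one_le_exp (u*(k:ℝ)/2)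
      have huk : 0 ≤ u*(k:ℝ) := by positivity
      nlinarith [Real.exp_nonneg (u*(k:ℝ)/2)]
    have hcomb : ‖WW n k‖ ≤ 4 * Real.exp 1 * u * Real.exp (-(u*(k:ℝ)/2)) := by
      have step : ‖WW n k‖
          ≤ u * (Real.exp 1 * Real.exp (-(u*(k:ℝ)))) * (4 * Real.exp (u*(k:ℝ)/2)) := by
        calc ‖WW n k‖ ≤ u * z^(k-1) * (1 + 2*(k:ℝ)*u) := hW
        _ ≤ u * (Real.exp 1 * Real.exp (-(u*(k:ℝ)))) * (1 + 2*(k:ℝ)*u) := by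
            apply mul_le_mul_of_nonneg_right _ (by positivity)
            exact mul_le_mul_of_nonneg_left hZ hu0.le
        _ ≤ u * (Real.exp 1 * Real.exp (-(u*(k:ℝ)))) * (4 * Real.exp (u*(k:ℝ)/2)) := by
            apply mul_le_mul_of_nonneg_left hQ (by positivity)
      have e : u * (Real.exp 1 * Real.exp (-(u*(k:ℝ)))) * (4 * Real.exp (u*(k:ℝ)/2))
          = 4 * Real.exp 1 * u * (Real.exp (-(u*(k:ℝ))) * Real.exp (u*(k:ℝ)/2)) := by ring
      have e2 : Real.exp (-(u*(k:ℝ))) * Real.exp (u*(k:ℝ)/2) = Real.exp (-(u*(k:ℝ)/2)) := by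
        rw [← Real.exp_add]
        congr 1
        ring
      rw [e, e2] at step
      exact step
    have hE : Real.exp (-(u*(k:ℝ)/2)) ≤ (u*(k:ℝ)/2)^(-γ) :=
      exp_neg_le_rpow hγ0 hγ1 (by positivity)
    have hR : (u*(k:ℝ)/2)^(-γ) ≤ u^(-γ) * (4 * ((k:ℝ)+1)^(-γ)) := by
      have e1 : (u*(k:ℝ)/2)^(-γ) = u^(-γ) * ((k:ℝ)/2)^(-γ) := by
        rw [show u*(k:ℝ)/2 = u * ((k:ℝ)/2) by ring, Real.mul_rpow hu0.le (by positivity)]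
      rw [e1]
      apply mul_le_mul_of_nonneg_left _ (Real.rpow_nonneg hu0.le _)
      have h14 : ((k:ℝ)+1)/4 ≤ (k:ℝ)/2 := by linarith
      have h2 : (((k:ℝ)+1)/4)^γ ≤ ((k:ℝ)/2)^γ := Real.rpow_le_rpow (by positivity) h14 hγ0.le
      have h3 : ((k:ℝ)/2)^(-γ) ≤ (((k:ℝ)+1)/4)^(-γ) := by
        rw [Real.rpow_neg (by positivity), Real.rpow_neg (by positivity)]
        exact inv_anti₀ (Real.rpow_pos_of_pos (by positivity) _) h2
      have h4 : (((k:ℝ)+1)/4)^(-γ) = ((k:ℝ)+1)^(-γ) * (4:ℝ)^γ := by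
        rw [Real.div_rpow (by positivity) (by norm_num)]
        rw [Real.rpow_neg (show (0:ℝ) ≤ 4 by norm_num)]
        rw [div_inv_eq_mul]
      have h5 : (4:ℝ)^γ ≤ 4 := by
        calc (4:ℝ)^γ ≤ (4:ℝ)^(1:ℝ) :=
          Real.rpow_le_rpow_of_exponent_le (by norm_num) hγ1
        _ = 4 := Real.rpow_one 4
      calc ((k:ℝ)/2)^(-γ) ≤ (((k:ℝ)+1)/4)^(-γ) := h3
      _ = ((k:ℝ)+1)^(-γ) * (4:ℝ)^γ := h4
      _ ≤ ((k:ℝ)+1)^(-γ) * 4 := by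
          apply mul_le_mul_of_nonneg_left h5 (Real.rpow_nonneg (by positivity) _)
      _ = 4 * ((k:ℝ)+1)^(-γ) := by ring
    have hWtot : ‖WW n k‖ ≤ 16 * Real.exp 1 * u^(1-γ) * ((k:ℝ)+1)^(-γ) := by
      have hx : Real.exp (-(u*(k:ℝ)/2)) ≤ u^(-γ) * (4 * ((k:ℝ)+1)^(-γ)) := le_trans hE hR
      have step : ‖WW n k‖ ≤ 4 * Real.exp 1 * u * (u^(-γ) * (4 * ((k:ℝ)+1)^(-γ))) := by
        calc ‖WW n k‖ ≤ 4 * Real.exp 1 * u * Real.exp (-(u*(k:ℝ)/2)) := hcomb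
        _ ≤ 4 * Real.exp 1 * u * (u^(-γ) * (4 * ((k:ℝ)+1)^(-γ))) := by
            apply mul_le_mul_of_nonneg_left hx (by positivity)
      have e1 : u * u^(-γ) = u^(1-γ) := by
        rw [show (1-γ) = 1 + -γ by ring, Real.rpow_add hu0, Real.rpow_one]
      calc ‖WW n k‖ ≤ 4 * Real.exp 1 * u * (u^(-γ) * (4 * ((k:ℝ)+1)^(-γ))) := step
      _ = 16 * Real.exp 1 * (u * u^(-γ)) * ((k:ℝ)+1)^(-γ) := by ring
      _ = 16 * Real.exp 1 * u^(1-γ) * ((k:ℝ)+1)^(-γ) := by rw [e1]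
    calc ‖mc a k * WW n k‖ = ‖mc a k‖ * ‖WW n k‖ := norm_mul _ _
    _ ≤ (M * ((k:ℝ)+1)^(-β)) * (16 * Real.exp 1 * u^(1-γ) * ((k:ℝ)+1)^(-γ)) := by
        apply mul_le_mul (hM k) hWtot (norm_nonneg _)
        have : (0:ℝ) ≤ ((k:ℝ)+1)^(-β) := Real.rpow_nonneg (by positivity) _
        nlinarith
    _ = (16 * Real.exp 1 * M) * u^(1-γ) * (((k:ℝ)+1)^(-β) * ((k:ℝ)+1)^(-γ)) := by ring
    _ = (16 * Real.exp 1 * M) * (uu n)^(1-γ) * ((k:ℝ)+1)^(-(β+γ)) := by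
        rw [← Real.rpow_add (by positivity : (0:ℝ) < (k:ℝ)+1)]
        rw [show -β + -γ = -(β+γ) by ring]

lemma summable_shift_rpow {p : ℝ} (hp : 1 < p) : Summable (fun k:ℕ => ((k:ℝ)+1)^(-p)) := by
  have h := Real.summable_nat_rpow_inv.mpr hp
  have h2 := (summable_nat_add_iff 1).mpr h
  apply h2.congr
  intro n
  rw [← Real.rpow_neg (by positivity : (0:ℝ) ≤ ((n+1:ℕ):ℝ))]
  push_cast
  ring_nf

lemma uu_rpow (n : ℕ) (q : ℝ) : (uu n)^q = ((n:ℝ)+1)^(-(2*q)) := by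
  have hb : (0:ℝ) < (n:ℝ)+1 := by positivity
  unfold uu
  rw [← Real.rpow_natCast ((n:ℝ)+1) 2, ← Real.rpow_neg hb.le,
    ← Real.rpow_mul hb.le]
  norm_num

/-- For `Re s > 1`, `ζ(s) = (1/(s-1)) ∑_{k=0}^∞ ((1-s/2)_k / k!) A_k`, where the series
(in the sense of convergence of partial sums) converges. -/
theorem riemannZeta_eq_hypergeometric_like_series (s : ℂ) (hs : 1 < s.re) :
    ∃ L : ℂ,
      Tendsto
        (fun N => ∑ k ∈ Finset.range N,
          (ascPochhammer ℂ k).eval (1 - s / 2) / (k.factorial : ℂ) * maslankaA k)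
        atTop (𝓝 L) ∧
      riemannZeta s = 1 / (s - 1) * L := by
  set a : ℂ := 1 - s/2 with ha
  set β : ℝ := min (3/4) (1/4 + s.re/4) with hβ
  have hβ0 : 0 < β := lt_min (by norm_num) (by linarith)
  have hβh : 1/2 < β := lt_min (by norm_num) (by linarith)
  have hβ34 : β ≤ 3/4 := min_le_left _ _
  have hβ1 : β < 1 := lt_of_le_of_lt hβ34 (by norm_num)
  have hre2 : (s/2).re = s.re/2 := by
    rw [show (2:ℂ) = ((2:ℝ):ℂ) by norm_num, Complex.div_ofReal_re]
  have hrea : a.re < 1 - β := by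
    rw [ha]
    simp only [Complex.sub_re, Complex.one_re, hre2]
    have hmin : β ≤ 1/4 + s.re/4 := min_le_right _ _
    linarith
  set γ : ℝ := 3/4 - β/2 with hγ
  have hγ0 : 0 < γ := by rw [hγ]; linarith
  have hγ1 : γ ≤ 1 := by rw [hγ]; linarith
  have hβγ : 1 < β + γ := by rw [hγ]; linarith
  have h2γ : 1 < 2*(1-γ) := by rw [hγ]; linarith
  obtain ⟨M, hM1, hM⟩ := mc_norm_bound a hβ0 hβ1 hrea
  set C : ℝ := 16 * Real.exp 1 * M with hC
  have hC0 : 0 ≤ C := by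
    have h1e : (1:ℝ) ≤ Real.exp 1 := by linarith [Real.add_one_le_exp (1:ℝ)]
    rw [hC]
    nlinarith
  have hZsum : Summable (fun k:ℕ => ((k:ℝ)+1)^(-(β+γ))) := summable_shift_rpow hβγ
  set Z : ℝ := ∑' (k:ℕ), ((k:ℝ)+1)^(-(β+γ)) with hZdef
  have hZ0 : 0 ≤ Z := tsum_nonneg (fun k => Real.rpow_nonneg (by positivity) _)
  have hSummW : ∀ k : ℕ, Summable (fun n => WW n k) := by
    intro k
    have h := summable_sum (s := range (k+1))
      (f := fun j (n:ℕ) => (-1:ℂ)^j * (k.choose j) * (2*(j:ℂ)+1) * (uu n:ℂ)^(j+1))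
      (fun j _ => (summable_uu_pow j).mul_left _)
    exact h.congr (fun n => W_eq_inner n k)
  have h_swap : ∀ N, ∑ k ∈ range N, mc a k * maslankaA k
      = ∑' (n:ℕ), ∑ k ∈ range N, mc a k * WW n k := by
    intro N
    have hterm : ∀ k, mc a k * maslankaA k = ∑' (n:ℕ), mc a k * WW n k := by
      intro k
      have h1 : maslankaA k = ∑' (n:ℕ), WW n k := by
        rw [maslankaA, A_eq]
        exact tsum_congr (fun n => W_eq_inner n k)
      rw [h1]
      exact tsum_mul_left.symm
    rw [Finset.sum_congr rfl (fun k _ => hterm k)]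
    exact (Summable.tsum_finsetSum (fun k _ => (hSummW k).mul_left _)).symm
  have h_bound : ∀ N n, ‖∑ k ∈ range N, mc a k * WW n k‖ ≤ C * (uu n)^(1-γ) * Z := by
    intro N n
    calc ‖∑ k ∈ range N, mc a k * WW n k‖ ≤ ∑ k ∈ range N, ‖mc a k * WW n k‖ :=
        norm_sum_le _ _
    _ ≤ ∑ k ∈ range N, C * (uu n)^(1-γ) * ((k:ℝ)+1)^(-(β+γ)) :=
        Finset.sum_le_sum (fun k _ => master_bound a M β γ hM hM1 hγ0 hγ1 n k)
    _ = (C * (uu n)^(1-γ)) * ∑ k ∈ range N, ((k:ℝ)+1)^(-(β+γ)) := by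
        rw [Finset.mul_sum]
    _ ≤ (C * (uu n)^(1-γ)) * Z := by
        apply mul_le_mul_of_nonneg_left _
          (mul_nonneg hC0 (Real.rpow_nonneg (uu_pos n).le _))
        exact Summable.sum_le_tsum (range N) (fun k _ => Real.rpow_nonneg (by positivity) _) hZsum
    _ = C * (uu n)^(1-γ) * Z := by ring
  have hbs : Summable (fun n:ℕ => C * (uu n)^(1-γ) * Z) := by
    apply ((summable_shift_rpow h2γ).mul_left (C * Z)).congr
    intro n
    rw [uu_rpow n (1-γ)]
    ring
  have h_tendsto := tendsto_tsum_of_dominated_convergence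
    (f := fun N (n:ℕ) => ∑ k ∈ range N, mc a k * WW n k)
    (g := fun n:ℕ => (s-1) * (1/((n:ℂ)+1)^s))
    (bound := fun n => C * (uu n)^(1-γ) * Z) hbs
    (fun n => (hasSum_per_n s n).tendsto_sum_nat)
    (Eventually.of_forall (fun N => fun n => h_bound N n))
  have hLval : ∑' (n:ℕ), (s-1) * (1/((n:ℂ)+1)^s) = (s-1) * riemannZeta s := by
    rw [tsum_mul_left, ← zeta_eq_tsum_one_div_nat_add_one_cpow hs]
  refine ⟨(s-1) * riemannZeta s, ?_, ?_⟩
  · have hfun : (fun N => ∑ k ∈ Finset.range N,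
        (ascPochhammer ℂ k).eval (1 - s / 2) / (k.factorial : ℂ) * maslankaA k)
        = fun N => ∑' (n:ℕ), ∑ k ∈ range N, mc a k * WW n k := by
      funext N
      rw [← h_swap N]
      rfl
    rw [hfun, ← hLval]
    exact h_tendsto
  · have hs1 : s - 1 ≠ 0 := by
      intro h
      have he : s = 1 := by linear_combination h
      rw [he] at hs
      simp at hs
    field_simp
end

section
/- For every k ∈ ℕ, the coefficient A_k equals the derivative at α = 1 of the function α ↦ α · Σ_{n=1}^∞ (1/n²)·(1 - α²/n²)^k (a real function of the real variable α); that is, A_k = d/dα [ α · Σ_{n=1}^∞ n^{-2} (1 - α²/n²)^k ] evaluated at α = 1. -/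
/-- The real zeta value `∑' n, 1/(n+1)^(2j+2)`. -/
noncomputable def maslankaZ (j : ℕ) : ℝ := ∑' n : ℕ, 1 / ((n : ℝ) + 1) ^ (2 * j + 2)

lemma maslankaZ_summable (j : ℕ) :
    Summable (fun n : ℕ => 1 / ((n : ℝ) + 1) ^ (2 * j + 2)) := by
  have h : Summable (fun n : ℕ => 1 / ((n : ℝ)) ^ (2 * j + 2)) :=
    Real.summable_one_div_nat_pow.mpr (by omega)
  have := (summable_nat_add_iff 1).mpr h
  refine this.congr fun n => ?_
  push_cast
  ring_nf

lemma riemannZeta_eq_maslankaZ (j : ℕ) :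
    riemannZeta (2 * (j : ℂ) + 2) = ((maslankaZ j : ℝ) : ℂ) := by
  have harg : (2 * (j : ℂ) + 2) = ((2 * j + 2 : ℕ) : ℂ) := by push_cast; ring
  rw [harg, zeta_nat_eq_tsum_of_gt_one (by omega : 1 < 2 * j + 2)]
  have hsum : Summable (fun n : ℕ => 1 / ((n : ℝ)) ^ (2 * j + 2)) :=
    Real.summable_one_div_nat_pow.mpr (by omega)
  have hcast : (fun n : ℕ => 1 / (n : ℂ) ^ (2 * j + 2)) =
      fun n : ℕ => ((1 / ((n : ℝ)) ^ (2 * j + 2) : ℝ) : ℂ) := by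
    funext n; push_cast; ring
  rw [hcast, ← Complex.ofReal_tsum]
  congr 1
  rw [Summable.tsum_eq_zero_add hsum]
  have h0 : (1 : ℝ) / ((0 : ℕ) : ℝ) ^ (2 * j + 2) = 0 := by
    simp [pow_succ]
  rw [h0, zero_add]
  unfold maslankaZ
  congr 1
  funext n
  push_cast
  ring_nf

lemma maslanka_tsum_expand (k : ℕ) (α : ℝ) :
    (∑' n : ℕ, 1 / ((n : ℝ) + 1) ^ 2 * (1 - α ^ 2 / ((n : ℝ) + 1) ^ 2) ^ k)
    = ∑ j ∈ Finset.range (k + 1),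
        (-1 : ℝ) ^ j * (k.choose j : ℝ) * α ^ (2 * j) * maslankaZ j := by
  have hterm : ∀ n : ℕ,
      1 / ((n : ℝ) + 1) ^ 2 * (1 - α ^ 2 / ((n : ℝ) + 1) ^ 2) ^ k
      = ∑ j ∈ Finset.range (k + 1),
          ((-1 : ℝ) ^ j * (k.choose j : ℝ) * α ^ (2 * j)) *
            (1 / ((n : ℝ) + 1) ^ (2 * j + 2)) := by
    intro n
    have hm : ((n : ℝ) + 1) ≠ 0 := by positivity
    have hexp : (1 - α ^ 2 / ((n : ℝ) + 1) ^ 2) ^ k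
        = ∑ j ∈ Finset.range (k + 1),
            (-(α ^ 2 / ((n : ℝ) + 1) ^ 2)) ^ j * 1 ^ (k - j) * (k.choose j : ℝ) := by
      rw [← add_pow]; ring_nf
    rw [hexp, Finset.mul_sum]
    refine Finset.sum_congr rfl fun j _ => ?_
    rw [neg_pow, div_pow, one_pow, mul_one, pow_mul α 2 j, pow_add ((n:ℝ)+1), pow_mul]
    field_simp
  rw [tsum_congr hterm]
  rw [Summable.tsum_finsetSum (fun j _ => (maslankaZ_summable j).mul_left _)]
  refine Finset.sum_congr rfl fun j _ => ?_
  rw [tsum_mul_left]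
  rfl

/-- For every `k ∈ ℕ`, `A_k` is the derivative at `α = 1` of the real function
`α ↦ α · ∑_{n=1}^∞ n⁻² (1 - α²/n²)^k`. -/
theorem maslankaA_eq_deriv (k : ℕ) :
    ∃ d : ℝ,
      HasDerivAt
        (fun α : ℝ =>
          α * ∑' n : ℕ, 1 / ((n : ℝ) + 1) ^ 2 * (1 - α ^ 2 / ((n : ℝ) + 1) ^ 2) ^ k)
        d 1 ∧
      maslankaA k = (d : ℂ) := by
  refine ⟨∑ j ∈ Finset.range (k + 1),
      (-1 : ℝ) ^ j * (k.choose j : ℝ) * (2 * j + 1) * maslankaZ j, ?_, ?_⟩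
  · have hfun : (fun α : ℝ =>
        α * ∑' n : ℕ, 1 / ((n : ℝ) + 1) ^ 2 * (1 - α ^ 2 / ((n : ℝ) + 1) ^ 2) ^ k)
        = fun α : ℝ => ∑ j ∈ Finset.range (k + 1),
            ((-1 : ℝ) ^ j * (k.choose j : ℝ) * maslankaZ j) * α ^ (2 * j + 1) := by
      funext α
      rw [maslanka_tsum_expand, Finset.mul_sum]
      refine Finset.sum_congr rfl fun j _ => ?_
      ring
    rw [hfun]
    have h : HasDerivAt
        (fun α : ℝ => ∑ j ∈ Finset.range (k + 1),
            ((-1 : ℝ) ^ j * (k.choose j : ℝ) * maslankaZ j) * α ^ (2 * j + 1))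
        (∑ j ∈ Finset.range (k + 1),
            ((-1 : ℝ) ^ j * (k.choose j : ℝ) * maslankaZ j) *
              ((2 * j + 1 : ℕ) * (1 : ℝ) ^ (2 * j + 1 - 1))) 1 :=
      HasDerivAt.fun_sum fun j _ => (hasDerivAt_pow (2 * j + 1) (1 : ℝ)).const_mul _
    convert h using 1
    refine (Finset.sum_congr rfl fun j _ => ?_)
    push_cast
    ring
  · unfold maslankaA
    rw [Complex.ofReal_sum]
    refine Finset.sum_congr rfl fun j _ => ?_
    rw [riemannZeta_eq_maslankaZ]
    push_cast
    ring
end
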